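/- Work on a probability space (Ω, F, ℙ). Let η₀, η₁, η₂ be independent standard Gaussian real random variables. Fix real parameters μ > 0, λ > 0, σ_B > 0 and t > 0, and define X₀ = √μ · η₀, Y = X₀ + σ_B · η₁, X_t = e^{−t/2} · X₀ + √(λ(1 − e^{−t})) · η₂. Set p = λ/μ, q = μ/σ_B², and D_t = 1 + (e^t − 1) p (1 + q). Then E[(X_t − (q e^{−t/2}/(1+q)) · Y)²] = D_t · μ e^{−t}/(1 + q). -/

import Mathlib

open MeasureTheory ProbabilityTheory Real Set
open scoped ENNReal NNReal

section GaussAux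

lemma gauss_transfer (g : ℝ → ℝ) :
    ∫ x, g x ∂(gaussianReal 0 1) = ∫ x, gaussianPDFReal 0 1 x * g x := by
  rw [gaussianReal_of_var_ne_zero 0 one_ne_zero]
  have hmeas : Measurable fun x => (gaussianPDFReal 0 1 x).toNNReal :=
    (measurable_gaussianPDFReal 0 1).real_toNNReal
  have hpdf : gaussianPDF 0 1 = fun x => (((gaussianPDFReal 0 1 x).toNNReal : ℝ≥0) : ℝ≥0∞) := rfl
  rw [hpdf, integral_withDensity_eq_integral_smul hmeas]
  refine integral_congr_ae (Filter.Eventually.of_forall fun x => ?_)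
  simp [NNReal.smul_def, Real.coe_toNNReal _ (gaussianPDFReal_nonneg 0 1 x)]

lemma gauss_pdf_eq (x : ℝ) :
    gaussianPDFReal 0 1 x = (Real.sqrt (2 * π))⁻¹ * rexp (-(2⁻¹) * x ^ 2) := by
  rw [gaussianPDFReal]
  norm_num
  left; ring

lemma integrable_base : Integrable (fun x : ℝ => x ^ 2 * rexp (-(2⁻¹) * x ^ 2)) := by
  have h := integrable_rpow_mul_exp_neg_mul_sq (b := 2⁻¹) (by norm_num) (s := 2) (by norm_num)
  have h2 : ∀ x : ℝ, x ^ (2:ℝ) = x ^ (2:ℕ) := fun x => by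
    rw [← Real.rpow_natCast x 2]; norm_num
  refine h.congr (Filter.Eventually.of_forall fun x => ?_)
  simp only [h2]

lemma integral_base : ∫ x : ℝ, x ^ 2 * rexp (-(2⁻¹) * x ^ 2) = Real.sqrt (2 * π) := by
  have h1 : ∫ x : ℝ, x ^ 2 * rexp (-(2⁻¹) * x ^ 2)
      = ∫ x : ℝ, (fun y : ℝ => y ^ 2 * rexp (-(2⁻¹) * y ^ 2)) |x| := by
    simp_rw [sq_abs]
  rw [h1, integral_comp_abs (f := fun y : ℝ => y ^ 2 * rexp (-(2⁻¹) * y ^ 2))]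
  have h2 : ∫ x in Ioi (0:ℝ), x ^ 2 * rexp (-(2⁻¹) * x ^ 2)
      = ∫ x in Ioi (0:ℝ), x ^ (2:ℝ) * rexp (-(2⁻¹) * x ^ (2:ℝ)) := by
    have h2' : ∀ x : ℝ, x ^ (2:ℝ) = x ^ (2:ℕ) := fun x => by
      rw [← Real.rpow_natCast x 2]; norm_num
    refine setIntegral_congr_fun measurableSet_Ioi fun x _ => ?_
    simp only [h2']
  rw [h2, integral_rpow_mul_exp_neg_mul_rpow (by norm_num) (by norm_num) (by norm_num)]
  have h3 : ((2:ℝ) + 1) / 2 = 1/2 + 1 := by norm_num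
  rw [h3, Real.Gamma_add_one (by norm_num), Real.Gamma_one_half_eq]
  have h4 : ((2:ℝ)⁻¹) ^ (-((2:ℝ) + 1) / 2) = (2:ℝ) ^ ((3:ℝ)/2) := by
    rw [Real.inv_rpow (by norm_num : (0:ℝ) ≤ 2), ← Real.rpow_neg (by norm_num : (0:ℝ) ≤ 2)]
    norm_num
  rw [h4]
  have h5 : (2:ℝ) ^ ((3:ℝ)/2) = 2 * Real.sqrt 2 := by
    rw [show ((3:ℝ)/2) = 1 + 1/2 by norm_num, Real.rpow_add two_pos, Real.rpow_one,
      ← Real.sqrt_eq_rpow]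
  rw [h5, Real.sqrt_mul (by norm_num : (0:ℝ) ≤ 2)]
  ring

lemma gauss_integrable_sq : Integrable (fun x : ℝ => x ^ 2) (gaussianReal 0 1) := by
  rw [gaussianReal_of_var_ne_zero 0 one_ne_zero]
  have hmeas : Measurable fun x => (gaussianPDFReal 0 1 x).toNNReal :=
    (measurable_gaussianPDFReal 0 1).real_toNNReal
  have hpdf : gaussianPDF 0 1 = fun x => (((gaussianPDFReal 0 1 x).toNNReal : ℝ≥0) : ℝ≥0∞) := rfl
  rw [hpdf]
  have h : Integrable (fun x : ℝ => (Real.sqrt (2*π))⁻¹ * (x ^ 2 * rexp (-(2⁻¹) * x ^ 2))) :=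
    integrable_base.const_mul _
  have h' : Integrable (fun x : ℝ => (gaussianPDFReal 0 1 x).toNNReal • x ^ 2) := by
    refine h.congr (Filter.Eventually.of_forall fun x => ?_)
    show (Real.sqrt (2*π))⁻¹ * (x ^ 2 * rexp (-(2⁻¹) * x ^ 2))
      = (gaussianPDFReal 0 1 x).toNNReal • x ^ 2
    rw [NNReal.smul_def, Real.coe_toNNReal _ (gaussianPDFReal_nonneg 0 1 x), gauss_pdf_eq,
      smul_eq_mul]
    ring
  exact (integrable_withDensity_iff_integrable_smul (g := fun x : ℝ => x ^ 2) hmeas).mpr h'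

lemma gauss_integral_sq : ∫ x, x ^ 2 ∂(gaussianReal 0 1) = 1 := by
  rw [gauss_transfer]
  have h1 : ∫ x : ℝ, gaussianPDFReal 0 1 x * x ^ 2
      = ∫ x : ℝ, (Real.sqrt (2*π))⁻¹ * (x ^ 2 * rexp (-(2⁻¹) * x ^ 2)) := by
    refine integral_congr_ae (Filter.Eventually.of_forall fun x => ?_)
    simp only [gauss_pdf_eq]; ring
  rw [h1, integral_const_mul, integral_base, inv_mul_cancel₀]
  positivity

lemma gauss_integral_id : ∫ x, x ∂(gaussianReal 0 1) = 0 := by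
  rw [gauss_transfer]
  set g : ℝ → ℝ := fun x => gaussianPDFReal 0 1 x * x with hg
  have hodd : ∀ x, g (-x) = - g x := by
    intro x
    simp only [hg, gauss_pdf_eq, neg_sq]
    ring
  have h := integral_neg_eq_self g (volume : Measure ℝ)
  have h2 : ∫ x, g (-x) = - ∫ x, g x := by
    simp_rw [hodd]; exact integral_neg g
  rw [h2] at h
  linarith

end GaussAux

/-- Conditional variance formula: the second moment of the residual
`X_t − (q e^{−t/2}/(1+q)) Y` equals `D_t μ e^{−t}/(1+q)` (Proposition 1). -/
theorem residual_second_moment {Ω : Type*} [MeasurableSpace Ω]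
    (P : Measure Ω) [IsProbabilityMeasure P]
    (η₀ η₁ η₂ : Ω → ℝ)
    (hη₀ : Measurable η₀) (hη₁ : Measurable η₁) (hη₂ : Measurable η₂)
    (hind : iIndepFun ![η₀, η₁, η₂] P)
    (hg₀ : P.map η₀ = gaussianReal 0 1) (hg₁ : P.map η₁ = gaussianReal 0 1)
    (hg₂ : P.map η₂ = gaussianReal 0 1)
    (μ lam σB t : ℝ) (hμ : 0 < μ) (hlam : 0 < lam) (hσB : 0 < σB) (ht : 0 < t)
    (X₀ Y Xt : Ω → ℝ)
    (hX₀ : X₀ = fun ω => Real.sqrt μ * η₀ ω)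
    (hY : Y = fun ω => X₀ ω + σB * η₁ ω)
    (hXt : Xt = fun ω =>
      Real.exp (-t / 2) * X₀ ω + Real.sqrt (lam * (1 - Real.exp (-t))) * η₂ ω)
    (p q Dt : ℝ)
    (hp : p = lam / μ) (hq : q = μ / σB ^ 2)
    (hDt : Dt = 1 + (Real.exp t - 1) * p * (1 + q)) :
    (∫ ω, (Xt ω - q * Real.exp (-t / 2) / (1 + q) * Y ω) ^ 2 ∂P)
      = Dt * μ * Real.exp (-t) / (1 + q) := by
  -- integrability and moments of each η
  have mem : ∀ (η : Ω → ℝ), Measurable η → P.map η = gaussianReal 0 1 →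
      Integrable (fun ω => η ω ^ 2) P ∧ Integrable η P ∧
      (∫ ω, η ω ^ 2 ∂P) = 1 ∧ (∫ ω, η ω ∂P) = 0 := by
    intro η hη hg
    have hsqi : Integrable (fun ω => η ω ^ 2) P := by
      have : Integrable (fun x : ℝ => x ^ 2) (P.map η) := hg ▸ gauss_integrable_sq
      exact (integrable_map_measure (by fun_prop) hη.aemeasurable).mp this
    have hmem : MemLp η 2 P := (memLp_two_iff_integrable_sq hη.aestronglyMeasurable).mpr hsqi
    have hi : Integrable η P := hmem.integrable one_le_two
    have hintsq : (∫ ω, η ω ^ 2 ∂P) = 1 := by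
      calc (∫ ω, η ω ^ 2 ∂P) = ∫ y, y ^ 2 ∂(P.map η) :=
            (integral_map (μ := P) hη.aemeasurable
              ((measurable_id.pow_const 2).aestronglyMeasurable)).symm
        _ = 1 := by rw [hg]; exact gauss_integral_sq
    have hint : (∫ ω, η ω ∂P) = 0 := by
      calc (∫ ω, η ω ∂P) = ∫ y, y ∂(P.map η) :=
            (integral_map (μ := P) hη.aemeasurable
              (measurable_id.aestronglyMeasurable)).symm
        _ = 0 := by rw [hg]; exact gauss_integral_id
    exact ⟨hsqi, hi, hintsq, hint⟩
  obtain ⟨hsq₀, hi₀, hm₀, hz₀⟩ := mem η₀ hη₀ hg₀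
  obtain ⟨hsq₁, hi₁, hm₁, hz₁⟩ := mem η₁ hη₁ hg₁
  obtain ⟨hsq₂, hi₂, hm₂, hz₂⟩ := mem η₂ hη₂ hg₂
  -- independence of pairs
  have ind01 : IndepFun η₀ η₁ P := hind.indepFun (i := 0) (j := 1) (by decide)
  have ind02 : IndepFun η₀ η₂ P := hind.indepFun (i := 0) (j := 2) (by decide)
  have ind12 : IndepFun η₁ η₂ P := hind.indepFun (i := 1) (j := 2) (by decide)
  have c01 : (∫ ω, η₀ ω * η₁ ω ∂P) = 0 := by
    rw [ind01.integral_fun_mul_eq_mul_integral hη₀.aestronglyMeasurable hη₁.aestronglyMeasurable, hz₀, hz₁]; ring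
  have c02 : (∫ ω, η₀ ω * η₂ ω ∂P) = 0 := by
    rw [ind02.integral_fun_mul_eq_mul_integral hη₀.aestronglyMeasurable hη₂.aestronglyMeasurable, hz₀, hz₂]; ring
  have c12 : (∫ ω, η₁ ω * η₂ ω ∂P) = 0 := by
    rw [ind12.integral_fun_mul_eq_mul_integral hη₁.aestronglyMeasurable hη₂.aestronglyMeasurable, hz₁, hz₂]; ring
  have ic01 : Integrable (fun ω => η₀ ω * η₁ ω) P := ind01.integrable_mul hi₀ hi₁
  have ic02 : Integrable (fun ω => η₀ ω * η₂ ω) P := ind02.integrable_mul hi₀ hi₂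
  have ic12 : Integrable (fun ω => η₁ ω * η₂ ω) P := ind12.integrable_mul hi₁ hi₂
  -- coefficients
  set k : ℝ := q * Real.exp (-t / 2) / (1 + q) with hk
  set a : ℝ := (Real.exp (-t / 2) - k) * Real.sqrt μ with ha
  set b : ℝ := -(k * σB) with hb
  set c : ℝ := Real.sqrt (lam * (1 - Real.exp (-t))) with hc
  have hpt : ∀ ω, (Xt ω - q * Real.exp (-t / 2) / (1 + q) * Y ω) ^ 2
      = a ^ 2 * η₀ ω ^ 2 + b ^ 2 * η₁ ω ^ 2 + c ^ 2 * η₂ ω ^ 2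
        + (2 * a * b) * (η₀ ω * η₁ ω) + (2 * a * c) * (η₀ ω * η₂ ω)
        + (2 * b * c) * (η₁ ω * η₂ ω) := by
    intro ω
    rw [hXt, hY, hX₀]
    simp only [ha, hb, hc, hk]
    ring
  have hI : (∫ ω, (Xt ω - q * Real.exp (-t / 2) / (1 + q) * Y ω) ^ 2 ∂P)
      = a ^ 2 + b ^ 2 + c ^ 2 := by
    have I1 : Integrable (fun ω => a ^ 2 * η₀ ω ^ 2) P := hsq₀.const_mul _
    have I2 : Integrable (fun ω => b ^ 2 * η₁ ω ^ 2) P := hsq₁.const_mul _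
    have I3 : Integrable (fun ω => c ^ 2 * η₂ ω ^ 2) P := hsq₂.const_mul _
    have I4 : Integrable (fun ω => (2 * a * b) * (η₀ ω * η₁ ω)) P := ic01.const_mul _
    have I5 : Integrable (fun ω => (2 * a * c) * (η₀ ω * η₂ ω)) P := ic02.const_mul _
    have I6 : Integrable (fun ω => (2 * b * c) * (η₁ ω * η₂ ω)) P := ic12.const_mul _
    have I12 : Integrable (fun ω => a ^ 2 * η₀ ω ^ 2 + b ^ 2 * η₁ ω ^ 2) P := I1.add I2
    have I123 : Integrable
        (fun ω => a ^ 2 * η₀ ω ^ 2 + b ^ 2 * η₁ ω ^ 2 + c ^ 2 * η₂ ω ^ 2) P := I12.add I3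
    have I1234 : Integrable (fun ω => a ^ 2 * η₀ ω ^ 2 + b ^ 2 * η₁ ω ^ 2 + c ^ 2 * η₂ ω ^ 2
        + (2 * a * b) * (η₀ ω * η₁ ω)) P := I123.add I4
    have I12345 : Integrable (fun ω => a ^ 2 * η₀ ω ^ 2 + b ^ 2 * η₁ ω ^ 2 + c ^ 2 * η₂ ω ^ 2
        + (2 * a * b) * (η₀ ω * η₁ ω) + (2 * a * c) * (η₀ ω * η₂ ω)) P := I1234.add I5
    calc (∫ ω, (Xt ω - q * Real.exp (-t / 2) / (1 + q) * Y ω) ^ 2 ∂P)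
        = ∫ ω, (a ^ 2 * η₀ ω ^ 2 + b ^ 2 * η₁ ω ^ 2 + c ^ 2 * η₂ ω ^ 2
            + (2 * a * b) * (η₀ ω * η₁ ω) + (2 * a * c) * (η₀ ω * η₂ ω)
            + (2 * b * c) * (η₁ ω * η₂ ω)) ∂P :=
          integral_congr_ae (Filter.Eventually.of_forall fun ω => hpt ω)
      _ = (∫ ω, (a ^ 2 * η₀ ω ^ 2 + b ^ 2 * η₁ ω ^ 2 + c ^ 2 * η₂ ω ^ 2
            + (2 * a * b) * (η₀ ω * η₁ ω) + (2 * a * c) * (η₀ ω * η₂ ω)) ∂P)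
          + ∫ ω, (2 * b * c) * (η₁ ω * η₂ ω) ∂P := integral_add I12345 I6
      _ = ((∫ ω, (a ^ 2 * η₀ ω ^ 2 + b ^ 2 * η₁ ω ^ 2 + c ^ 2 * η₂ ω ^ 2
            + (2 * a * b) * (η₀ ω * η₁ ω)) ∂P)
          + ∫ ω, (2 * a * c) * (η₀ ω * η₂ ω) ∂P)
          + ∫ ω, (2 * b * c) * (η₁ ω * η₂ ω) ∂P := by rw [integral_add I1234 I5]
      _ = (((∫ ω, (a ^ 2 * η₀ ω ^ 2 + b ^ 2 * η₁ ω ^ 2 + c ^ 2 * η₂ ω ^ 2) ∂P)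
          + ∫ ω, (2 * a * b) * (η₀ ω * η₁ ω) ∂P)
          + ∫ ω, (2 * a * c) * (η₀ ω * η₂ ω) ∂P)
          + ∫ ω, (2 * b * c) * (η₁ ω * η₂ ω) ∂P := by rw [integral_add I123 I4]
      _ = ((((∫ ω, (a ^ 2 * η₀ ω ^ 2 + b ^ 2 * η₁ ω ^ 2) ∂P) + ∫ ω, c ^ 2 * η₂ ω ^ 2 ∂P)
          + ∫ ω, (2 * a * b) * (η₀ ω * η₁ ω) ∂P)
          + ∫ ω, (2 * a * c) * (η₀ ω * η₂ ω) ∂P)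
          + ∫ ω, (2 * b * c) * (η₁ ω * η₂ ω) ∂P := by rw [integral_add I12 I3]
      _ = (((((∫ ω, a ^ 2 * η₀ ω ^ 2 ∂P) + ∫ ω, b ^ 2 * η₁ ω ^ 2 ∂P)
          + ∫ ω, c ^ 2 * η₂ ω ^ 2 ∂P)
          + ∫ ω, (2 * a * b) * (η₀ ω * η₁ ω) ∂P)
          + ∫ ω, (2 * a * c) * (η₀ ω * η₂ ω) ∂P)
          + ∫ ω, (2 * b * c) * (η₁ ω * η₂ ω) ∂P := by rw [integral_add I1 I2]
      _ = a ^ 2 + b ^ 2 + c ^ 2 := by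
          rw [integral_const_mul, integral_const_mul, integral_const_mul, integral_const_mul,
            integral_const_mul, integral_const_mul, hm₀, hm₁, hm₂, c01, c02, c12]
          ring
  rw [hI]
  -- algebraic identity
  have hq0 : 0 < q := hq ▸ div_pos hμ (by positivity)
  have h1q : (0:ℝ) < 1 + q := by linarith
  have hE : Real.exp (-t / 2) ^ 2 = Real.exp (-t) := by
    rw [sq, ← Real.exp_add]; norm_num
  have hqσ : q * σB ^ 2 = μ := by
    rw [hq, div_mul_cancel₀ _ (by positivity : σB ^ 2 ≠ 0)]
  have het : Real.exp t * Real.exp (-t) = 1 := by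
    rw [← Real.exp_add]; simp
  have hak : Real.exp (-t / 2) - k = Real.exp (-t / 2) / (1 + q) := by
    rw [hk]; field_simp; ring
  have ha2 : a ^ 2 = Real.exp (-t) * μ / (1 + q) ^ 2 := by
    rw [ha, hak, mul_pow, Real.sq_sqrt hμ.le, div_pow, hE]; ring
  have hb2 : b ^ 2 = q * Real.exp (-t) * μ / (1 + q) ^ 2 := by
    have h1 : b ^ 2 = q * Real.exp (-t / 2) ^ 2 * (q * σB ^ 2) / (1 + q) ^ 2 := by
      rw [hb, hk]; field_simp
    rw [h1, hqσ, hE]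
  have hc2 : c ^ 2 = lam * (1 - Real.exp (-t)) := by
    rw [hc, Real.sq_sqrt]
    have : Real.exp (-t) ≤ 1 := Real.exp_le_one_iff.mpr (by linarith)
    nlinarith
  rw [ha2, hb2, hc2, hDt, hp]
  have hexp : Real.exp t = (Real.exp (-t))⁻¹ := by
    field_simp
    linarith [het]
  rw [hexp]
  have hu : Real.exp (-t) ≠ 0 := (Real.exp_pos _).ne'
  field_simp
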